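/- Let d_1, d_2 be even numbers, d = d_1+d_2, let λ_1 be a special symplectic partition of d_1 and λ_2 a special orthogonal partition of d_2. Let W = W(λ_1,λ_2) = λ_1+λ_2+ξ be the Waldspurger sequence for the type C data. Then: (i) W is a symplectic partition of d; (ii) if ν_1 is a B-collapse of (λ_1^t)^+, ν_2 is a D-collapse of λ_2^t, and ν is a B-collapse of (W^t)^+, then ν_1 ∪ ν_2 ≤ ν in dominance order; (iii) if moreover η is a C-collapse of ((ν_1 ∪ ν_2)^t)^−, then W ≤ η in dominance order. -/

import Mathlib

/-!
Write `s = λ₁ + λ₂`. Since `λ₁ᵗ` and `λ₂ᵗ` are symplectic, the parts of `λ₁` (and of `λ₂`) in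
positions `2k+1, 2k+2` have equal parity; since `λ₁` is symplectic and `λ₂` orthogonal, an odd
part of `λ₁` or an even part of `λ₂` in position `2k+1` is repeated in position `2k+2`. Hence
the nonzero values of `ξ` alternate `+1, -1, +1, …`, every prefix sum of `ξ` is `0` or `1`, and
the total is `0`. So `W` is a partition of `d`, and each odd part of `W` sits next to an equal
one, which gives (i).

For (ii) and (iii) everything is read off columns. The first `N` columns of `W` hold at most one
box less than those of `s`, and when one is lost, a matched position fixes the parities of every
split `N = a + b` at which `(λ₁ᵗ)⁺` and `λ₂ᵗ` are tight. For an orthogonal partition, the length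
plus the size of a prefix ending at a descent is even; so at a tight split, the orthogonal
partitions below `(λ₁ᵗ)⁺` and `λ₂ᵗ` can be shifted to a split with a larger prefix sum. This
bounds every prefix of `ν₁ ∪ ν₂` by `(Wᵗ)⁺`, and (iii) is the transposed form of the same bound.
-/

/-- `f` is a partition of `d`: weakly decreasing, finitely many nonzero terms, total sum `d`.
    Indexing is 0-based: `f j` is the `(j+1)`-st part. -/
def IsPartitionOf (f : ℕ → ℕ) (d : ℕ) : Prop :=
  Antitone f ∧ ∃ N, (∀ j, N ≤ j → f j = 0) ∧ ∑ j ∈ Finset.range N, f j = d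

/-- Transpose of a partition (0-based): `ptrans f k` = #{j : f j ≥ k+1}, i.e. `(f^t)_{k+1}`. -/
noncomputable def ptrans (f : ℕ → ℕ) : ℕ → ℕ := fun k => Nat.card {j : ℕ // k + 1 ≤ f j}

/-- Multiplicity of the part `k` in `f` (meaningful for `k > 0`). -/
noncomputable def pmult (f : ℕ → ℕ) (k : ℕ) : ℕ := Nat.card {j : ℕ // f j = k}

/-- Orthogonal: every even positive part occurs with even multiplicity. -/
def IsOrthogonal (f : ℕ → ℕ) : Prop := ∀ k, 0 < k → Even k → Even (pmult f k)

/-- Symplectic: every odd positive part occurs with even multiplicity. -/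
def IsSymplectic (f : ℕ → ℕ) : Prop := ∀ k, 0 < k → Odd k → Even (pmult f k)

/-- Dominance order for ℕ-valued sequences. -/
def NDomLE (f g : ℕ → ℕ) : Prop :=
  ∀ N, ∑ j ∈ Finset.range N, f j ≤ ∑ j ∈ Finset.range N, g j

/-- Dominance order for ℤ-valued sequences. -/
def DomLE (f g : ℕ → ℤ) : Prop :=
  ∀ N, ∑ j ∈ Finset.range N, f j ≤ ∑ j ∈ Finset.range N, g j

/-- `ν` is the `P`-collapse of `μ` (both of total size `m`): `ν` is a partition of `m`
    satisfying `P`, `ν ≤ μ`, and every partition `σ` of `m` satisfying `P` with `σ ≤ μ`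
    satisfies `σ ≤ ν`. -/
def IsCollapse (P : (ℕ → ℕ) → Prop) (m : ℕ) (μ ν : ℕ → ℕ) : Prop :=
  IsPartitionOf ν m ∧ P ν ∧ NDomLE ν μ ∧
    ∀ σ, IsPartitionOf σ m → P σ → NDomLE σ μ → NDomLE σ ν

/-- B-collapse (largest orthogonal partition below `μ`, `m` odd). -/
def IsBCollapse : ℕ → (ℕ → ℕ) → (ℕ → ℕ) → Prop := IsCollapse IsOrthogonal
/-- C-collapse (largest symplectic partition below `μ`, `m` even). -/
def IsCCollapse : ℕ → (ℕ → ℕ) → (ℕ → ℕ) → Prop := IsCollapse IsSymplectic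
/-- D-collapse (largest orthogonal partition below `μ`, `m` even). -/
def IsDCollapse : ℕ → (ℕ → ℕ) → (ℕ → ℕ) → Prop := IsCollapse IsOrthogonal

/-- `μ^−` : decrease the smallest nonzero part by 1. -/
def minusOne (f : ℕ → ℕ) : ℕ → ℕ :=
  fun j => if 0 < f j ∧ f (j+1) = 0 then f j - 1 else f j

/-- `μ^+` : increase the largest part by 1. -/
def plusOne (f : ℕ → ℕ) : ℕ → ℕ := fun j => if j = 0 then f 0 + 1 else f j

/-- `u = f ∪ g` : `u` is weakly decreasing, finitely supported, and every positive
    part occurs in `u` with multiplicity the sum of its multiplicities in `f` and `g`. -/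
def IsUnionOf (u f g : ℕ → ℕ) : Prop :=
  Antitone u ∧ (∃ N, ∀ j, N ≤ j → u j = 0) ∧
    ∀ k, 0 < k → pmult u k = pmult f k + pmult g k

/-- The sequence ξ attached to `(f, g, ε₁, ε₂, d)`.  Index `j` here corresponds to the
    1-based index `j+1` of the paper. -/
def xiSeq (f g : ℕ → ℕ) (e1 e2 d : ℕ) : ℕ → ℤ := fun j =>
  if (j + 1) % 2 = (d + 1) % 2 ∧ f j % 2 = e1 ∧ g j % 2 = e2 ∧
      (j = 0 ∨ f j + g j < f (j - 1) + g (j - 1)) then 1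
  else if (j + 1) % 2 = d % 2 ∧ f j % 2 = e1 ∧ g j % 2 = e2 ∧
      f (j + 1) + g (j + 1) < f j + g j then -1
  else 0

/-- The Waldspurger sequence `W(f,g) = f + g + ξ` (ℤ-valued a priori). -/
def wald (f g : ℕ → ℕ) (e1 e2 d : ℕ) : ℕ → ℤ :=
  fun j => (f j : ℤ) + (g j : ℤ) + xiSeq f g e1 e2 d j

open Finset

theorem exists_forall_iff_lt {p : ℕ → Prop} (hp : ∀ ⦃i j⦄, i ≤ j → p j → p i)
    (h : ∃ j, ¬ p j) : ∃ c, ∀ j, p j ↔ j < c := by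
  classical
  refine ⟨Nat.find h, fun j => ⟨fun hj => ?_, fun hj => not_not.mp (Nat.find_min h hj)⟩⟩
  by_contra hc
  exact Nat.find_spec h (hp (not_lt.mp hc) hj)

theorem natCard_eq_card_filter {p : ℕ → Prop} [DecidablePred p] {B : ℕ}
    (h : ∀ j, p j → j < B) : Nat.card {j // p j} = #{j ∈ range B | p j} := by
  rw [← Nat.card_eq_finsetCard]
  exact Nat.card_congr (Equiv.subtypeEquivRight fun j => by simpa using fun hj => h j hj)

theorem natCard_lt (c : ℕ) : Nat.card {j // j < c} = c := by
  rw [natCard_eq_card_filter (B := c) fun _ h => h, filter_true_of_mem fun _ h => mem_range.mp h,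
    card_range]

theorem even_card_of_pairing {F : Finset ℕ} (p : ℕ → Prop) [DecidablePred p]
    (hup : ∀ j ∈ F, p j → j + 1 ∈ F ∧ ¬ p (j + 1))
    (hdown : ∀ j ∈ F, ¬ p j → 0 < j ∧ j - 1 ∈ F ∧ p (j - 1)) : Even #F := by
  rw [← card_filter_add_card_filter_not p]
  suffices #{j ∈ F | p j} = #{j ∈ F | ¬ p j} from ⟨_, by rw [this]⟩
  refine card_bij' (fun j _ => j + 1) (fun j _ => j - 1) (fun j hj => ?_) (fun j hj => ?_)
    (fun j _ => Nat.add_sub_cancel j 1) (fun j hj => ?_)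
  · rw [mem_filter] at hj ⊢
    exact hup j hj.1 hj.2
  · rw [mem_filter] at hj ⊢
    exact (hdown j hj.1 hj.2).2
  · rw [mem_filter] at hj
    exact Nat.sub_add_cancel (hdown j hj.1 hj.2).1

section Transpose

variable {f : ℕ → ℕ} {B : ℕ}

theorem ptrans_eq_card_filter (hB : ∀ j, B ≤ j → f j = 0) (k : ℕ) :
    ptrans f k = #{j ∈ range B | k < f j} :=
  natCard_eq_card_filter fun j hj => by by_contra hc; have := hB j (not_lt.mp hc); omega

theorem pmult_eq_card_filter (hB : ∀ j, B ≤ j → f j = 0) {k : ℕ} (hk : 0 < k) :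
    pmult f k = #{j ∈ range B | f j = k} :=
  natCard_eq_card_filter fun j hj => by by_contra hc; have := hB j (not_lt.mp hc); omega

theorem pmult_succ_add_ptrans_succ (hB : ∀ j, B ≤ j → f j = 0) (k : ℕ) :
    pmult f (k + 1) + ptrans f (k + 1) = ptrans f k := by
  rw [pmult_eq_card_filter hB k.succ_pos, ptrans_eq_card_filter hB, ptrans_eq_card_filter hB,
    ← card_union_of_disjoint (disjoint_filter.2 fun j _ h1 h2 => by omega), ← filter_or]
  congr 1
  ext j
  simp only [mem_filter, mem_range]
  omega

theorem ptrans_eq_sum_pmult (hB : ∀ j, B ≤ j → f j = 0) {V : ℕ} (hV : ∀ j, f j ≤ V) (k : ℕ) :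
    ptrans f k = ∑ i ∈ Ioc k V, pmult f i := by
  rw [ptrans_eq_card_filter hB, card_eq_sum_card_fiberwise (f := f) (t := Ioc k V)
    fun j hj => by simp only [coe_filter, Set.mem_ofPred_eq] at hj; simpa using ⟨hj.2, hV j⟩]
  refine sum_congr rfl fun i hi => ?_
  rw [pmult_eq_card_filter hB (by simp only [mem_Ioc] at hi; omega), filter_filter]
  congr 1
  ext j
  simp only [mem_filter, mem_Ioc] at hi ⊢
  constructor
  · exact fun h => ⟨h.1, h.2.2⟩
  · exact fun h => ⟨h.1, by omega, h.2⟩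

theorem ptrans_antitone (hB : ∀ j, B ≤ j → f j = 0) : Antitone (ptrans f) := by
  intro a b hab
  rw [ptrans_eq_card_filter hB, ptrans_eq_card_filter hB]
  exact card_le_card (monotone_filter_right _ fun j _ => lt_of_le_of_lt hab)

theorem ptrans_eq_zero_of_le (hB : ∀ j, B ≤ j → f j = 0) {k : ℕ} (hk : ∀ j, f j ≤ k) :
    ptrans f k = 0 := by
  rw [ptrans_eq_card_filter hB, card_eq_zero, filter_eq_empty_iff]
  exact fun j _ => not_lt.mpr (hk j)

theorem lt_ptrans_iff (hf : Antitone f) (hB : ∀ j, B ≤ j → f j = 0) {j k : ℕ} :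
    j < ptrans f k ↔ k < f j := by
  obtain ⟨c, hc⟩ := exists_forall_iff_lt (p := fun j => k < f j)
    (fun i j hij h => lt_of_lt_of_le h (hf hij)) ⟨B, by simp [hB B le_rfl]⟩
  have : ptrans f k = c := by
    rw [ptrans, ← natCard_lt c]
    exact Nat.card_congr (Equiv.subtypeEquivRight hc)
  rw [this, hc]

theorem ptrans_ptrans (hf : Antitone f) (hB : ∀ j, B ≤ j → f j = 0) : ptrans (ptrans f) = f := by
  funext k
  rw [ptrans, ← natCard_lt (f k)]
  exact Nat.card_congr (Equiv.subtypeEquivRight fun j => lt_ptrans_iff hf hB)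

theorem ptrans_eq_zero_of_apply_zero_le (hf : Antitone f) (hB : ∀ j, B ≤ j → f j = 0) {k : ℕ}
    (hk : f 0 ≤ k) : ptrans f k = 0 :=
  ptrans_eq_zero_of_le hB fun j => (hf j.zero_le).trans hk

theorem pmult_ptrans_succ (hf : Antitone f) (hB : ∀ j, B ≤ j → f j = 0) (k : ℕ) :
    pmult (ptrans f) (k + 1) = f k - f (k + 1) := by
  have h := pmult_succ_add_ptrans_succ (f := ptrans f)
    (fun _ hj => ptrans_eq_zero_of_apply_zero_le hf hB hj) k
  rw [ptrans_ptrans hf hB] at h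
  omega

theorem sum_min_eq_sum_ptrans (hB : ∀ j, B ≤ j → f j = 0) (M : ℕ) :
    ∑ j ∈ range B, min (f j) M = ∑ v ∈ range M, ptrans f v := by
  have hmin : ∀ x, min x M = #{v ∈ range M | v < x} := fun x => by
    rw [show {v ∈ range M | v < x} = range (min x M) by ext v; simp only [mem_filter, mem_range]; omega, card_range]
  simp_rw [hmin, ptrans_eq_card_filter hB]
  exact sum_card_bipartiteAbove_eq_sum_card_bipartiteBelow (fun j v => v < f j)

theorem sum_range_eq_sum_min_ptrans (hf : Antitone f) (hB : ∀ j, B ≤ j → f j = 0) {V : ℕ}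
    (hV : f 0 ≤ V) (a : ℕ) :
    ∑ j ∈ range a, f j = ∑ v ∈ range V, min (ptrans f v) a := by
  rw [sum_min_eq_sum_ptrans (fun v hv => ptrans_eq_zero_of_apply_zero_le hf hB (hV.trans hv)),
    ptrans_ptrans hf hB]

theorem sum_range_eq_sum_ptrans (hf : Antitone f) (hB : ∀ j, B ≤ j → f j = 0) {V : ℕ}
    (hV : f 0 ≤ V) : ∑ j ∈ range B, f j = ∑ v ∈ range V, ptrans f v := by
  rw [← sum_min_eq_sum_ptrans hB]
  exact sum_congr rfl fun j _ => (min_eq_left ((hf j.zero_le).trans hV)).symm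

end Transpose

section Partition

variable {f : ℕ → ℕ} {B d : ℕ}

theorem sum_range_eq_of_le (hB : ∀ j, B ≤ j → f j = 0) {N : ℕ} (hN : B ≤ N) :
    ∑ j ∈ range N, f j = ∑ j ∈ range B, f j :=
  (sum_subset (range_subset_range.mpr hN) fun j _ hj => hB j (by simpa using hj)).symm

theorem IsPartitionOf.sum_range_eq (h : IsPartitionOf f d) (hB : ∀ j, B ≤ j → f j = 0) :
    ∑ j ∈ range B, f j = d := by
  obtain ⟨-, N, hN, rfl⟩ := h
  rw [← sum_range_eq_of_le hB (le_max_left B N), sum_range_eq_of_le hN (le_max_right B N)]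

theorem IsPartitionOf.sum_range_le (h : IsPartitionOf f d) (M : ℕ) : ∑ j ∈ range M, f j ≤ d := by
  obtain ⟨-, N, hN, hsum⟩ := h
  rw [← hsum, ← sum_range_eq_of_le hN (Nat.le_add_left N M)]
  exact sum_le_sum_of_subset (range_subset_range.mpr (Nat.le_add_right M N))

theorem IsPartitionOf.sum_ptrans_add_sum_range_le (h : IsPartitionOf f d) (K M : ℕ) :
    ∑ v ∈ range K, ptrans f v + ∑ j ∈ range M, f j ≤ M * K + d := by
  obtain ⟨B, hB, -⟩ := h.2
  have hB' : ∀ j, M + B ≤ j → f j = 0 := fun j hj => hB j (by omega)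
  have hMB : M ≤ M + B := Nat.le_add_right M B
  rw [← sum_min_eq_sum_ptrans hB' K, ← h.sum_range_eq hB', ← sum_range_add_sum_Ico _ hMB,
    ← sum_range_add_sum_Ico _ hMB]
  have h1 : ∑ j ∈ range M, min (f j) K ≤ M * K := by
    simpa using sum_le_card_nsmul (range M) (fun j => min (f j) K) K fun _ _ => min_le_right _ _
  have h2 : ∑ j ∈ Ico M (M + B), min (f j) K ≤ ∑ j ∈ Ico M (M + B), f j :=
    sum_le_sum fun _ _ => min_le_left _ _
  omega

theorem IsPartitionOf.sum_min_add_sum_range (h : IsPartitionOf f d) (hB : ∀ j, B ≤ j → f j = 0)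
    {a c : ℕ} (hcB : c ≤ B) (hlt : ∀ j < c, a ≤ f j) (hge : ∀ j, c ≤ j → f j ≤ a) :
    ∑ j ∈ range B, min (f j) a + ∑ j ∈ range c, f j = c * a + d := by
  rw [← h.sum_range_eq hB, ← sum_range_add_sum_Ico _ hcB, ← sum_range_add_sum_Ico _ hcB,
    sum_congr rfl fun j hj => min_eq_right (hlt j (mem_range.mp hj)),
    sum_congr rfl fun j hj => min_eq_left (hge j (mem_Ico.mp hj).1)]
  simp only [sum_const, card_range, smul_eq_mul]
  ring

theorem IsPartitionOf.sum_ptrans_add_sum_range_ptrans (h : IsPartitionOf f d) (M : ℕ) :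
    ∑ v ∈ range M, ptrans f v + ∑ j ∈ range (ptrans f M), f j = d + M * ptrans f M := by
  obtain ⟨B, hB, -⟩ := h.2
  have hlt : ∀ {j}, j < ptrans f M ↔ M < f j := lt_ptrans_iff h.1 hB
  have hKB : ptrans f M ≤ B := not_lt.mp fun hc => by have := hlt.mp hc; simp [hB B le_rfl] at this
  rw [← sum_min_eq_sum_ptrans hB M, h.sum_min_add_sum_range hB hKB (fun j hj => (hlt.mp hj).le)
    fun j hj => not_lt.mp fun hc => (not_lt.mpr hj) (hlt.mpr hc)]
  ring

theorem sum_range_two_mul_mod_two (hpair : ∀ k, f (2 * k) % 2 = f (2 * k + 1) % 2) (k : ℕ) :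
    (∑ j ∈ range (2 * k), f j) % 2 = 0 := by
  induction k with
  | zero => simp
  | succ k ih =>
    rw [show 2 * (k + 1) = 2 * k + 1 + 1 by ring, sum_range_succ, sum_range_succ]
    have := hpair k
    omega

/-- The parts of even size above a descent come in pairs. -/
theorem IsOrthogonal.even_add_sum_range (ho : IsOrthogonal f) (hf : Antitone f) {a : ℕ}
    (ha : f (a + 1) < f a) : Even (a + 1 + ∑ j ∈ range (a + 1), f j) := by
  classical
  have hsum : a + 1 + ∑ j ∈ range (a + 1), f j = ∑ j ∈ range (a + 1), (f j + 1) := by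
    rw [sum_add_distrib]; simp [add_comm]
  rw [hsum, even_sum_iff_even_card_odd, card_eq_sum_card_fiberwise (f := f)
    (t := {v ∈ Ioc (f (a + 1)) (f 0) | Even v}) fun j hj => ?_]
  · refine even_sum _ fun v hv => ?_
    simp only [mem_filter, mem_Ioc] at hv
    have hfib : #{j ∈ {j ∈ range (a + 1) | Odd (f j + 1)} | f j = v} = pmult f v := by
      rw [filter_filter, pmult, natCard_eq_card_filter (B := a + 1) fun j hj => ?_]
      · congr 1
        ext j
        simp only [mem_filter]
        exact ⟨fun h => ⟨h.1, h.2.2⟩, fun h => ⟨h.1, h.2 ▸ hv.2.add_one, h.2⟩⟩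
      · by_contra hc
        have := hf (not_lt.mp hc)
        omega
    rw [hfib]
    exact ho v (by omega) hv.2
  · simp only [coe_filter, mem_range, Set.mem_ofPred_eq, mem_Ioc] at hj ⊢
    refine ⟨⟨?_, hf (Nat.zero_le j)⟩, ?_⟩
    · exact lt_of_lt_of_le ha (hf (Nat.lt_succ_iff.mp hj.1))
    · obtain ⟨t, ht⟩ := hj.2
      exact ⟨t, by omega⟩

theorem IsOrthogonal.eq_of_odd_add_sum_range (ho : IsOrthogonal f) (hf : Antitone f) {a : ℕ}
    (hodd : Odd (a + 1 + ∑ j ∈ range (a + 1), f j)) : f a = f (a + 1) := by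
  by_contra hne
  exact Nat.not_even_iff_odd.mpr hodd
    (ho.even_add_sum_range hf (lt_of_le_of_ne (hf (Nat.le_succ a)) (Ne.symm hne)))

theorem mod_two_eq_of_isSymplectic_ptrans (hf : Antitone f) (hB : ∀ j, B ≤ j → f j = 0)
    (hs : IsSymplectic (ptrans f)) (k : ℕ) : f (2 * k) % 2 = f (2 * k + 1) % 2 := by
  have h := hs (2 * k + 1) (by omega) (odd_two_mul_add_one k)
  rw [pmult_ptrans_succ hf hB] at h
  have := hf (show 2 * k ≤ 2 * k + 1 by omega)
  obtain ⟨t, ht⟩ := h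
  omega

theorem eq_of_mod_two_eq_of_even_pmult (hf : Antitone f) (hB : ∀ j, B ≤ j → f j = 0)
    (hs : IsSymplectic (ptrans f)) {r : ℕ} (hr : ∀ v, 0 < v → v % 2 = r → Even (pmult f v))
    (k : ℕ) (hk : f (2 * k) % 2 = r) : f (2 * k) = f (2 * k + 1) := by
  induction k using Nat.strong_induction_on with
  | _ k ih =>
  by_contra hne
  have hlt : f (2 * k + 1) < f (2 * k) := lt_of_le_of_ne (hf (Nat.le_succ _)) (Ne.symm hne)
  obtain ⟨u, hu⟩ : ∃ u, f (2 * k) = u + 1 := ⟨f (2 * k) - 1, by omega⟩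
  have hlt' : ∀ {j k}, j < ptrans f k ↔ k < f j := lt_ptrans_iff hf hB
  -- the parts equal to `u + 1` occupy the positions `ptrans f (u + 1) ≤ j < 2k + 1`
  have htop : ptrans f u = 2 * k + 1 := by
    have h1 : 2 * k < ptrans f u := hlt'.mpr (by omega)
    have h2 : ¬ 2 * k + 1 < ptrans f u := fun h => by have := hlt'.mp h; omega
    omega
  have hc := pmult_succ_add_ptrans_succ hB u
  obtain ⟨t, ht⟩ := hr (u + 1) (by omega) (by omega)
  rw [htop] at hc
  obtain ⟨k', hk'⟩ : ∃ k', ptrans f (u + 1) = 2 * k' + 1 := ⟨k - t, by omega⟩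
  have hck : ptrans f (u + 1) ≤ 2 * k := not_lt.mp fun h => by have := hlt'.mp h; omega
  have h1 : u + 1 < f (2 * k') := hlt'.mp (by omega)
  have h2 : f (2 * k' + 1) ≤ u + 1 := not_lt.mp fun h => by have := hlt'.mpr h; omega
  have h3 : u < f (2 * k' + 1) := hlt'.mp (by omega)
  have hpair := mod_two_eq_of_isSymplectic_ptrans hf hB hs k'
  have := ih k' (by omega) (by omega)
  omega

end Partition

section Union

variable {u σ1 σ2 : ℕ → ℕ} {B : ℕ}

theorem IsPartitionOf.exists_common_bound {d1 d2 : ℕ} (h1 : IsPartitionOf σ1 d1)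
    (h2 : IsPartitionOf σ2 d2) : ∃ B, (∀ j, B ≤ j → σ1 j = 0) ∧ ∀ j, B ≤ j → σ2 j = 0 := by
  obtain ⟨B1, hB1, -⟩ := h1.2
  obtain ⟨B2, hB2, -⟩ := h2.2
  exact ⟨B1 + B2, fun j hj => hB1 j (by omega), fun j hj => hB2 j (by omega)⟩

theorem IsUnionOf.ptrans_apply (hu : IsUnionOf u σ1 σ2) (h1 : Antitone σ1) (h2 : Antitone σ2)
    (hB1 : ∀ j, B ≤ j → σ1 j = 0) (hB2 : ∀ j, B ≤ j → σ2 j = 0) (k : ℕ) :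
    ptrans u k = ptrans σ1 k + ptrans σ2 k := by
  obtain ⟨hua, ⟨N, hN⟩, hmult⟩ := hu
  rw [ptrans_eq_sum_pmult hN (V := u 0 + σ1 0 + σ2 0) fun j => by have := hua j.zero_le; omega,
    ptrans_eq_sum_pmult hB1 (V := u 0 + σ1 0 + σ2 0) fun j => by have := h1 j.zero_le; omega,
    ptrans_eq_sum_pmult hB2 (V := u 0 + σ1 0 + σ2 0) fun j => by have := h2 j.zero_le; omega,
    ← sum_add_distrib]
  exact sum_congr rfl fun i hi => hmult i (by simp only [mem_Ioc] at hi; omega)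

theorem IsUnionOf.isOrthogonal (hu : IsUnionOf u σ1 σ2) (h1 : IsOrthogonal σ1)
    (h2 : IsOrthogonal σ2) : IsOrthogonal u := fun k hk hke => by
  rw [hu.2.2 k hk]
  exact (h1 k hk hke).add (h2 k hk hke)

theorem IsUnionOf.isPartitionOf (hu : IsUnionOf u σ1 σ2) {d1 d2 : ℕ} (h1 : IsPartitionOf σ1 d1)
    (h2 : IsPartitionOf σ2 d2) : IsPartitionOf u (d1 + d2) := by
  obtain ⟨B, hB1, hB2⟩ := h1.exists_common_bound h2
  obtain ⟨N, hN⟩ := hu.2.1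
  refine ⟨hu.1, N, hN, ?_⟩
  rw [sum_range_eq_sum_ptrans hu.1 hN (V := u 0 + σ1 0 + σ2 0) (by omega),
    sum_congr rfl fun k _ => hu.ptrans_apply h1.1 h2.1 hB1 hB2 k, sum_add_distrib,
    ← sum_range_eq_sum_ptrans h1.1 hB1 (by omega), ← sum_range_eq_sum_ptrans h2.1 hB2 (by omega),
    h1.sum_range_eq hB1, h2.sum_range_eq hB2]

theorem exists_add_eq_forall_min_add_le {x y : ℕ → ℕ} (hx : Antitone x) (hy : Antitone y) {N : ℕ}
    (hN : ∃ v, x v + y v < N) :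
    ∃ a b, a + b = N ∧ ∀ v, min (x v + y v) N ≤ min (x v) a + min (y v) b := by
  obtain ⟨c, hc⟩ := exists_forall_iff_lt (p := fun v => N ≤ x v + y v)
    (fun i j hij h => h.trans (add_le_add (hx hij) (hy hij))) (by simpa using hN)
  rcases c with _ | q
  · have h0 := (hc 0).not.mpr (by omega)
    refine ⟨x 0, N - x 0, by omega, fun v => ?_⟩
    have := hx v.zero_le
    have := hy v.zero_le
    omega
  · have hq := (hc q).mpr (by omega)
    have hq1 := (hc (q + 1)).not.mpr (by omega)
    refine ⟨max (N - y q) (x (q + 1)), N - max (N - y q) (x (q + 1)), by omega, fun v => ?_⟩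
    have := hx (Nat.le_add_right q 1)
    have := hy (Nat.le_add_right q 1)
    rcases le_or_gt v q with hv | hv
    · have := hx hv
      have := hy hv
      omega
    · have := hx (show q + 1 ≤ v by omega)
      have := hy (show q + 1 ≤ v by omega)
      omega

theorem IsUnionOf.exists_sum_range_le (hu : IsUnionOf u σ1 σ2) (h1 : Antitone σ1)
    (h2 : Antitone σ2) (hB1 : ∀ j, B ≤ j → σ1 j = 0) (hB2 : ∀ j, B ≤ j → σ2 j = 0) (N : ℕ) :
    ∃ a b, a + b = N ∧
      ∑ j ∈ range N, u j ≤ ∑ j ∈ range a, σ1 j + ∑ j ∈ range b, σ2 j := by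
  rcases Nat.eq_zero_or_pos N with rfl | hN
  · exact ⟨0, 0, rfl, by simp⟩
  obtain ⟨Bu, hBu⟩ := hu.2.1
  set V := u 0 + σ1 0 + σ2 0
  obtain ⟨a, b, hab, hmin⟩ := exists_add_eq_forall_min_add_le (ptrans_antitone hB1)
    (ptrans_antitone hB2) (N := N) ⟨V, by
      rw [ptrans_eq_zero_of_apply_zero_le h1 hB1 (by omega),
        ptrans_eq_zero_of_apply_zero_le h2 hB2 (by omega)]
      omega⟩
  refine ⟨a, b, hab, ?_⟩
  rw [sum_range_eq_sum_min_ptrans hu.1 hBu (V := V) (by omega),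
    sum_range_eq_sum_min_ptrans h1 hB1 (V := V) (by omega),
    sum_range_eq_sum_min_ptrans h2 hB2 (V := V) (by omega), ← sum_add_distrib]
  refine sum_le_sum fun v _ => ?_
  rw [hu.ptrans_apply h1 h2 hB1 hB2]
  exact hmin v

end Union

section PlusMinus

variable {g : ℕ → ℕ}

theorem sum_range_plusOne {N : ℕ} (hN : 0 < N) :
    ∑ j ∈ range N, plusOne g j = ∑ j ∈ range N, g j + 1 := by
  obtain ⟨M, rfl⟩ : ∃ M, N = M + 1 := ⟨N - 1, by omega⟩
  simp only [sum_range_succ', plusOne, if_pos, Nat.succ_ne_zero, if_false]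
  omega

theorem sum_range_minusOne_of_pos (hg : Antitone g) {M : ℕ} (hM : 0 < g M) :
    ∑ j ∈ range M, minusOne g j = ∑ j ∈ range M, g j :=
  sum_congr rfl fun j hj => if_neg fun h => by
    have := hg (show j + 1 ≤ M from mem_range.mp hj)
    omega

theorem sum_range_le_sum_range_minusOne_add_one (hg : Antitone g) (M : ℕ) :
    ∑ j ∈ range M, g j ≤ ∑ j ∈ range M, minusOne g j + 1 := by
  classical
  have hlast : #{j ∈ range M | 0 < g j ∧ g (j + 1) = 0} ≤ 1 := by
    refine card_le_one.mpr fun i hi j hj => ?_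
    simp only [mem_filter] at hi hj
    by_contra hne
    rcases lt_or_gt_of_ne hne with h | h
    · have := hg (show i + 1 ≤ j from h); omega
    · have := hg (show j + 1 ≤ i from h); omega
  calc ∑ j ∈ range M, g j
      ≤ ∑ j ∈ range M, (minusOne g j + if 0 < g j ∧ g (j + 1) = 0 then 1 else 0) :=
        sum_le_sum fun j _ => by unfold minusOne; split_ifs <;> omega
    _ ≤ ∑ j ∈ range M, minusOne g j + 1 := by rw [sum_add_distrib, sum_boole]; simpa using hlast

end PlusMinus

theorem sum_range_add_sum_range_exchange {σ1 σ2 : ℕ → ℕ} (ha1 : Antitone σ1)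
    (ho1 : IsOrthogonal σ1) (ha2 : Antitone σ2) (ho2 : IsOrthogonal σ2) {a b : ℕ}
    (h1 : Odd (a + 1 + ∑ j ∈ range (a + 1), σ1 j)) (h2 : Odd (b + 1 + ∑ j ∈ range (b + 1), σ2 j)) :
    ∑ j ∈ range (a + 1), σ1 j + ∑ j ∈ range (b + 1), σ2 j ≤
        ∑ j ∈ range (a + 1 + 1), σ1 j + ∑ j ∈ range b, σ2 j ∨
      ∑ j ∈ range (a + 1), σ1 j + ∑ j ∈ range (b + 1), σ2 j <
        ∑ j ∈ range a, σ1 j + ∑ j ∈ range (b + 1 + 1), σ2 j := by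
  have he1 := ho1.eq_of_odd_add_sum_range ha1 h1
  have he2 := ho2.eq_of_odd_add_sum_range ha2 h2
  simp only [sum_range_succ]
  omega

theorem sum_range_add_sum_range_le_of_odd {σ1 σ2 μ1 μ2 C : ℕ → ℕ} (ha1 : Antitone σ1)
    (ho1 : IsOrthogonal σ1) (ha2 : Antitone σ2) (ho2 : IsOrthogonal σ2) (h1 : NDomLE σ1 μ1)
    (h2 : NDomLE σ2 μ2)
    (hle : ∀ a b, ∑ j ∈ range a, μ1 j + ∑ j ∈ range b, μ2 j ≤ C (a + b) + 2)
    (hodd : ∀ a b, ∑ j ∈ range a, μ1 j + ∑ j ∈ range b, μ2 j = C (a + b) + 2 →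
      Odd (a + ∑ j ∈ range a, μ1 j) ∧ Odd (b + ∑ j ∈ range b, μ2 j)) (a b : ℕ) :
    ∑ j ∈ range a, σ1 j + ∑ j ∈ range b, σ2 j ≤ C (a + b) + 1 := by
  set N := a + b
  set g : ℕ → ℕ := fun t => ∑ j ∈ range t, σ1 j + ∑ j ∈ range (N - t), σ2 j with hg
  -- `a₀` is the largest maximiser of `g` on `[0, N]`
  obtain ⟨m, hm, hmax⟩ := exists_max_image (range (N + 1)) g ⟨0, by simp⟩
  set a0 := Nat.findGreatest (fun t => ∀ t' ≤ N, g t' ≤ g t) N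
  have hmax0 : ∀ t' ≤ N, g t' ≤ g a0 :=
    Nat.findGreatest_spec (P := fun t => ∀ t' ≤ N, g t' ≤ g t) (Nat.lt_succ_iff.mp
      (mem_range.mp hm)) fun t' ht' => hmax t' (mem_range.mpr (Nat.lt_succ_of_le ht'))
  have ha0 : a0 ≤ N := Nat.findGreatest_le N
  have hgreat : a0 < N → ¬ ∀ t' ≤ N, g t' ≤ g (a0 + 1) := fun h =>
    Nat.findGreatest_is_greatest (lt_add_one a0) h
  clear_value a0
  have hga : g a = ∑ j ∈ range a, σ1 j + ∑ j ∈ range b, σ2 j := by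
    simp only [hg, N, Nat.add_sub_cancel_left]
  rw [← hga]
  refine (hmax0 a (Nat.le_add_right a b)).trans ?_
  obtain ⟨b0, hb0⟩ : ∃ b0, N - a0 = b0 := ⟨_, rfl⟩
  have hga0 : g a0 = ∑ j ∈ range a0, σ1 j + ∑ j ∈ range b0, σ2 j := by simp only [hg, hb0]
  have hs1 := h1 a0
  have hs2 := h2 b0
  have hC := hle a0 b0
  rw [show a0 + b0 = N by omega] at hC
  by_contra hcon
  obtain ⟨hodd1, hodd2⟩ := hodd a0 b0 (by rw [show a0 + b0 = N by omega]; omega)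
  rw [show ∑ j ∈ range a0, μ1 j = ∑ j ∈ range a0, σ1 j by omega] at hodd1
  rw [show ∑ j ∈ range b0, μ2 j = ∑ j ∈ range b0, σ2 j by omega] at hodd2
  obtain ⟨a', rfl⟩ : ∃ a', a0 = a' + 1 := ⟨a0 - 1, by rcases a0 with _ | _ <;> simp_all⟩
  obtain ⟨b', rfl⟩ : ∃ b', b0 = b' + 1 := ⟨b0 - 1, by rcases b0 with _ | _ <;> simp_all⟩
  -- at a tight split both prefixes end inside blocks of equal parts, so the split can move
  rcases sum_range_add_sum_range_exchange ha1 ho1 ha2 ho2 hodd1 hodd2 with h | h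
  · refine hgreat (by omega) fun t' ht' => (hmax0 t' ht').trans ?_
    have : g (a' + 1 + 1) = ∑ j ∈ range (a' + 1 + 1), σ1 j + ∑ j ∈ range b', σ2 j := by
      simp only [hg, show N - (a' + 1 + 1) = b' by omega]
    rwa [this, hga0]
  · have : g a' = ∑ j ∈ range a', σ1 j + ∑ j ∈ range (b' + 1 + 1), σ2 j := by
      simp only [hg, show N - a' = b' + 1 + 1 by omega]
    have := hmax0 a' (by omega)
    omega

structure TypeCData where
  l1 : ℕ → ℕ
  l2 : ℕ → ℕ
  d1 : ℕ
  d2 : ℕ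
  even_d1 : Even d1
  even_d2 : Even d2
  isPartitionOf_l1 : IsPartitionOf l1 d1
  isSymplectic_l1 : IsSymplectic l1
  isSymplectic_ptrans_l1 : IsSymplectic (ptrans l1)
  isPartitionOf_l2 : IsPartitionOf l2 d2
  isOrthogonal_l2 : IsOrthogonal l2
  isSymplectic_ptrans_l2 : IsSymplectic (ptrans l2)
  L : ℕ
  l1_eq_zero : ∀ j, L ≤ j → l1 j = 0
  l2_eq_zero : ∀ j, L ≤ j → l2 j = 0

namespace TypeCData

variable (S : TypeCData) {j : ℕ}

def s (j : ℕ) : ℕ := S.l1 j + S.l2 j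

/-- The positions with `λ₁ⱼ ≡ ε₁ = 0` and `λ₂ⱼ ≡ ε₂ = 1`, the only ones where `ξ` may be
nonzero. -/
def Matched (j : ℕ) : Prop := S.l1 j % 2 = 0 ∧ S.l2 j % 2 = 1

instance (j : ℕ) : Decidable (S.Matched j) := inferInstanceAs (Decidable (_ ∧ _))

def xi : ℕ → ℤ := xiSeq S.l1 S.l2 0 1 (S.d1 + S.d2)

def w (j : ℕ) : ℕ := (wald S.l1 S.l2 0 1 (S.d1 + S.d2) j).toNat

theorem antitone_s : Antitone S.s := fun _ _ h =>
  add_le_add (S.isPartitionOf_l1.1 h) (S.isPartitionOf_l2.1 h)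

theorem s_succ_le (j : ℕ) : S.s (j + 1) ≤ S.s j := S.antitone_s (Nat.le_add_right j 1)

theorem s_mod_two_of_matched (h : S.Matched j) : S.s j % 2 = 1 := by
  unfold s; unfold Matched at h; omega

theorem l1_mod_two (k : ℕ) : S.l1 (2 * k) % 2 = S.l1 (2 * k + 1) % 2 :=
  mod_two_eq_of_isSymplectic_ptrans S.isPartitionOf_l1.1 S.l1_eq_zero S.isSymplectic_ptrans_l1 k

theorem l2_mod_two (k : ℕ) : S.l2 (2 * k) % 2 = S.l2 (2 * k + 1) % 2 :=
  mod_two_eq_of_isSymplectic_ptrans S.isPartitionOf_l2.1 S.l2_eq_zero S.isSymplectic_ptrans_l2 k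

theorem l1_eq_of_odd (k : ℕ) (h : S.l1 (2 * k) % 2 = 1) : S.l1 (2 * k) = S.l1 (2 * k + 1) :=
  eq_of_mod_two_eq_of_even_pmult S.isPartitionOf_l1.1 S.l1_eq_zero S.isSymplectic_ptrans_l1
    (fun v hv hr => S.isSymplectic_l1 v hv (Nat.odd_iff.mpr hr)) k h

theorem l2_eq_of_even (k : ℕ) (h : S.l2 (2 * k) % 2 = 0) : S.l2 (2 * k) = S.l2 (2 * k + 1) :=
  eq_of_mod_two_eq_of_even_pmult S.isPartitionOf_l2.1 S.l2_eq_zero S.isSymplectic_ptrans_l2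
    (fun v hv hr => S.isOrthogonal_l2 v hv (Nat.even_iff.mpr hr)) k h

theorem matched_iff_of_mod_two (hj : j % 2 = 0) : S.Matched j ↔ S.Matched (j + 1) := by
  obtain ⟨k, rfl⟩ : ∃ k, j = 2 * k := ⟨j / 2, by omega⟩
  have := S.l1_mod_two k
  have := S.l2_mod_two k
  unfold Matched
  omega

theorem matched_iff_of_s_eq (h : S.s (j + 1) = S.s j) : S.Matched j ↔ S.Matched (j + 1) := by
  have := S.isPartitionOf_l1.1 (Nat.le_add_right j 1)
  have := S.isPartitionOf_l2.1 (Nat.le_add_right j 1)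
  unfold Matched
  unfold s at h
  omega

theorem mod_two_and_s_succ_lt (h : ¬ (S.Matched j ↔ S.Matched (j + 1))) :
    j % 2 = 1 ∧ S.s (j + 1) < S.s j := by
  refine ⟨by_contra fun hj => h (S.matched_iff_of_mod_two (by omega)), ?_⟩
  exact lt_of_le_of_ne (S.s_succ_le j) fun he => h (S.matched_iff_of_s_eq he)

theorem xi_eq_one_iff (j : ℕ) :
    S.xi j = 1 ↔ j % 2 = 0 ∧ S.Matched j ∧ (j = 0 ∨ S.s j < S.s (j - 1)) := by
  have := Nat.even_iff.mp S.even_d1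
  have := Nat.even_iff.mp S.even_d2
  simp only [xi, xiSeq, Matched, s]
  split_ifs <;> constructor <;> intro <;> first | contradiction | omega

theorem xi_eq_neg_one_iff (j : ℕ) :
    S.xi j = -1 ↔ j % 2 = 1 ∧ S.Matched j ∧ S.s (j + 1) < S.s j := by
  have := Nat.even_iff.mp S.even_d1
  have := Nat.even_iff.mp S.even_d2
  simp only [xi, xiSeq, Matched, s]
  split_ifs <;> constructor <;> intro <;> first | contradiction | omega

theorem xi_trichotomy (j : ℕ) : S.xi j = 1 ∨ S.xi j = 0 ∨ S.xi j = -1 := by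
  simp only [xi, xiSeq]
  split_ifs <;> simp

theorem matched_of_xi_ne_zero (h : S.xi j ≠ 0) : S.Matched j := by
  rcases S.xi_trichotomy j with h' | h' | h'
  · exact ((S.xi_eq_one_iff j).mp h').2.1
  · exact absurd h' h
  · exact ((S.xi_eq_neg_one_iff j).mp h').2.1

theorem xi_eq_neg_one_of_not_matched_succ (h : S.Matched j) (h' : ¬ S.Matched (j + 1)) :
    S.xi j = -1 :=
  (S.xi_eq_neg_one_iff j).mpr ⟨(S.mod_two_and_s_succ_lt (by tauto)).1, h,
    (S.mod_two_and_s_succ_lt (by tauto)).2⟩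

theorem xi_succ_eq_one_iff (h : S.Matched (j + 1)) :
    S.xi (j + 1) = 1 ↔ ¬ (S.Matched j ∧ S.xi j ≠ -1) := by
  rw [ne_eq, S.xi_eq_one_iff, S.xi_eq_neg_one_iff, Nat.add_sub_cancel]
  by_cases hj : S.Matched j
  · simp only [h, hj, true_and, not_and]
    omega
  · have := S.mod_two_and_s_succ_lt (by tauto)
    simp only [h, hj, false_and, not_false_eq_true, true_and, iff_true]
    omega

theorem sum_range_succ_xi (t : ℕ) :
    ∑ j ∈ range (t + 1), S.xi j = if S.Matched t ∧ S.xi t ≠ -1 then 1 else 0 := by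
  induction t with
  | zero =>
    rw [sum_range_one]
    by_cases h : S.Matched 0
    · rw [if_pos ⟨h, by rw [(S.xi_eq_one_iff 0).mpr ⟨rfl, h, Or.inl rfl⟩]; decide⟩]
      exact (S.xi_eq_one_iff 0).mpr ⟨rfl, h, Or.inl rfl⟩
    · rw [if_neg (by tauto)]
      by_contra h0
      exact h (S.matched_of_xi_ne_zero h0)
  | succ t ih =>
    rw [sum_range_succ, ih]
    by_cases h : S.Matched (t + 1)
    · have h1 := S.xi_succ_eq_one_iff h
      rcases S.xi_trichotomy (t + 1) with h2 | h2 | h2 <;> split_ifs <;> simp_all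
    · have h2 : S.xi (t + 1) = 0 := by
        by_contra h0
        exact h (S.matched_of_xi_ne_zero h0)
      have h3 : ¬ (S.Matched t ∧ S.xi t ≠ -1) := fun h4 =>
        h4.2 (S.xi_eq_neg_one_of_not_matched_succ h4.1 h)
      simp [h, h2, h3]

theorem not_matched_of_le (hj : S.L ≤ j) : ¬ S.Matched j := by
  unfold Matched
  rw [S.l2_eq_zero j hj]
  omega

theorem xi_eq_zero_of_le (hj : S.L ≤ j) : S.xi j = 0 := by
  by_contra h
  exact S.not_matched_of_le hj (S.matched_of_xi_ne_zero h)

theorem sum_range_xi : ∑ j ∈ range S.L, S.xi j = 0 := by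
  have h := S.sum_range_succ_xi S.L
  rw [sum_range_succ, S.xi_eq_zero_of_le le_rfl, if_neg fun h => S.not_matched_of_le le_rfl h.1]
    at h
  simpa using h


theorem wald_eq (j : ℕ) : wald S.l1 S.l2 0 1 (S.d1 + S.d2) j = S.s j + S.xi j := by
  simp only [wald, s, xi]
  push_cast
  ring

theorem cast_w (j : ℕ) : (S.w j : ℤ) = wald S.l1 S.l2 0 1 (S.d1 + S.d2) j := by
  refine Int.toNat_of_nonneg ?_
  rw [S.wald_eq]
  rcases S.xi_trichotomy j with h | h | h
  · omega
  · omega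
  · have := S.s_mod_two_of_matched ((S.xi_eq_neg_one_iff j).mp h).2.1
    omega

theorem cast_w_eq (j : ℕ) : (S.w j : ℤ) = S.s j + S.xi j := by rw [cast_w, wald_eq]

theorem s_succ_lt_of_xi_succ_eq_one (h : S.xi (j + 1) = 1) : S.s (j + 1) < S.s j := by
  simpa using ((S.xi_eq_one_iff (j + 1)).mp h).2.2

theorem s_succ_lt_of_xi_eq_neg_one (h : S.xi j = -1) : S.s (j + 1) < S.s j :=
  ((S.xi_eq_neg_one_iff j).mp h).2.2

theorem w_succ_le (j : ℕ) : S.w (j + 1) ≤ S.w j := by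
  have h0 := S.cast_w_eq j
  have h1 := S.cast_w_eq (j + 1)
  have := S.s_succ_le j
  have := S.xi_trichotomy j
  have := S.xi_trichotomy (j + 1)
  have e1 : S.xi (j + 1) = 1 → S.s (j + 1) < S.s j := S.s_succ_lt_of_xi_succ_eq_one
  have e2 : S.xi j = -1 → S.s (j + 1) < S.s j := S.s_succ_lt_of_xi_eq_neg_one
  -- a rise of `ξ` from `-1` to `1` happens between two odd values of `s`
  have e3 : S.xi (j + 1) = 1 → S.xi j = -1 → S.s j % 2 = 1 ∧ S.s (j + 1) % 2 = 1 :=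
    fun h h' => ⟨S.s_mod_two_of_matched (S.matched_of_xi_ne_zero (by omega)),
      S.s_mod_two_of_matched (S.matched_of_xi_ne_zero (by omega))⟩
  omega

theorem antitone_w : Antitone S.w := antitone_nat_of_succ_le S.w_succ_le

theorem w_eq_zero_of_le (hj : S.L ≤ j) : S.w j = 0 := by
  have h := S.cast_w_eq j
  rw [S.xi_eq_zero_of_le hj, s, S.l1_eq_zero j hj, S.l2_eq_zero j hj] at h
  omega

theorem sum_range_s : ∑ j ∈ range S.L, S.s j = S.d1 + S.d2 := by
  simp only [s, sum_add_distrib, S.isPartitionOf_l1.sum_range_eq S.l1_eq_zero,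
    S.isPartitionOf_l2.sum_range_eq S.l2_eq_zero]

theorem isPartitionOf_w : IsPartitionOf S.w (S.d1 + S.d2) := by
  refine ⟨S.antitone_w, S.L, fun j hj => S.w_eq_zero_of_le hj, ?_⟩
  have h : ((∑ j ∈ range S.L, S.w j : ℕ) : ℤ) = ∑ j ∈ range S.L, ((S.s j : ℤ) + S.xi j) := by
    push_cast
    exact sum_congr rfl fun j _ => S.cast_w_eq j
  rw [sum_add_distrib, S.sum_range_xi, add_zero, ← Nat.cast_sum, S.sum_range_s] at h
  exact_mod_cast h

theorem xi_eq_zero_of_w_mod_two (h : S.w j % 2 = 1) : S.xi j = 0 := by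
  by_contra h0
  have := S.s_mod_two_of_matched (S.matched_of_xi_ne_zero h0)
  have := S.cast_w_eq j
  have := S.xi_trichotomy j
  omega

theorem w_eq_s_of_xi_eq_zero (h : S.xi j = 0) : S.w j = S.s j := by
  have := S.cast_w_eq j
  omega

theorem xi_eq_zero_of_not_matched (h : ¬ S.Matched j) : S.xi j = 0 :=
  by_contra fun h0 => h (S.matched_of_xi_ne_zero h0)

theorem xi_eq_zero_of_s_succ_eq (hj : j % 2 = 1) (h : S.s (j + 1) = S.s j) :
    S.xi j = 0 ∧ S.xi (j + 1) = 0 := by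
  constructor
  · rcases S.xi_trichotomy j with h' | h' | h'
    · exact absurd ((S.xi_eq_one_iff j).mp h').1 (by omega)
    · exact h'
    · exact absurd (S.s_succ_lt_of_xi_eq_neg_one h') (by omega)
  · rcases S.xi_trichotomy (j + 1) with h' | h' | h'
    · exact absurd (S.s_succ_lt_of_xi_succ_eq_one h') (by omega)
    · exact h'
    · exact absurd ((S.xi_eq_neg_one_iff _).mp h').1 (by omega)

theorem w_succ_eq_of_mod_two (hw : S.w j % 2 = 1) (hj : (S.l1 j + j) % 2 = 1) :
    S.w (j + 1) = S.w j ∧ (S.l1 (j + 1) + (j + 1)) % 2 = 0 := by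
  have hx := S.xi_eq_zero_of_w_mod_two hw
  have hs := S.w_eq_s_of_xi_eq_zero hx
  by_cases hm : S.Matched j
  · have hjo : j % 2 = 1 := by unfold Matched at hm; omega
    have heq : S.s (j + 1) = S.s j := by
      by_contra hne
      have := (S.xi_eq_neg_one_iff j).mpr ⟨hjo, hm, lt_of_le_of_ne (S.s_succ_le j) hne⟩
      omega
    have hm1 := (S.matched_iff_of_s_eq heq).mp hm
    unfold Matched at hm1
    refine ⟨?_, by omega⟩
    rw [S.w_eq_s_of_xi_eq_zero (S.xi_eq_zero_of_s_succ_eq hjo heq).2, heq, hs]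
  · obtain ⟨k, rfl⟩ : ∃ k, j = 2 * k := ⟨j / 2, by unfold Matched s at *; omega⟩
    have h1 := S.l1_eq_of_odd k (by unfold Matched s at *; omega)
    have h2 := S.l2_eq_of_even k (by unfold Matched s at *; omega)
    have hm1 : ¬ S.Matched (2 * k + 1) := by unfold Matched at *; omega
    rw [S.w_eq_s_of_xi_eq_zero (S.xi_eq_zero_of_not_matched hm1), hs]
    unfold s
    omega

theorem w_pred_eq_of_mod_two (hw : S.w j % 2 = 1) (hj : (S.l1 j + j) % 2 = 0) :
    0 < j ∧ S.w (j - 1) = S.w j ∧ (S.l1 (j - 1) + (j - 1)) % 2 = 1 := by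
  have hx := S.xi_eq_zero_of_w_mod_two hw
  have hs := S.w_eq_s_of_xi_eq_zero hx
  by_cases hm : S.Matched j
  · have hje : j % 2 = 0 := by unfold Matched at hm; omega
    have hj0 : 0 < j := Nat.pos_of_ne_zero fun h0 => by
      subst h0
      have := (S.xi_eq_one_iff 0).mpr ⟨rfl, hm, Or.inl rfl⟩
      omega
    obtain ⟨i, rfl⟩ : ∃ i, j = i + 1 := ⟨j - 1, by omega⟩
    have heq : S.s (i + 1) = S.s i := by
      by_contra hne
      have := (S.xi_eq_one_iff (i + 1)).mpr
        ⟨hje, hm, Or.inr (by simpa using lt_of_le_of_ne (S.s_succ_le i) hne)⟩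
      omega
    have hm1 := (S.matched_iff_of_s_eq heq).mpr hm
    unfold Matched at hm1
    simp only [Nat.add_sub_cancel]
    refine ⟨hj0, ?_, by omega⟩
    rw [S.w_eq_s_of_xi_eq_zero (S.xi_eq_zero_of_s_succ_eq (by omega) heq).1, ← heq, hs]
  · obtain ⟨k, rfl⟩ : ∃ k, j = 2 * k + 1 := ⟨j / 2, by unfold Matched s at *; omega⟩
    have hp1 := S.l1_mod_two k
    have hp2 := S.l2_mod_two k
    have h1 := S.l1_eq_of_odd k (by unfold Matched s at *; omega)
    have h2 := S.l2_eq_of_even k (by unfold Matched s at *; omega)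
    have hm1 : ¬ S.Matched (2 * k) := by unfold Matched at *; omega
    simp only [Nat.add_sub_cancel]
    rw [S.w_eq_s_of_xi_eq_zero (S.xi_eq_zero_of_not_matched hm1), hs]
    unfold s
    omega

theorem isSymplectic_w : IsSymplectic S.w := by
  intro v hv hodd
  have hvo := Nat.odd_iff.mp hodd
  rw [pmult_eq_card_filter (fun _ => S.w_eq_zero_of_le) hv]
  have hmem : ∀ {i}, i ∈ ({j ∈ range S.L | S.w j = v} : Finset ℕ) ↔ S.w i = v := fun {i} => by
    simp only [mem_filter, mem_range, and_iff_right_iff_imp]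
    exact fun h => not_le.mp fun hi => by rw [S.w_eq_zero_of_le hi] at h; omega
  -- the equal neighbour of an odd part `W j` is `W (j + 1)` or `W (j - 1)` according to the
  -- parity of `λ₁ⱼ + j`
  refine even_card_of_pairing (fun j => (S.l1 j + j) % 2 = 1) (fun j hj hp => ?_) fun j hj hp => ?_
  · rw [hmem] at hj
    obtain ⟨h1, h2⟩ := S.w_succ_eq_of_mod_two (by omega) hp
    exact ⟨hmem.mpr (h1.trans hj), by omega⟩
  · rw [hmem] at hj
    obtain ⟨h0, h1, h2⟩ := S.w_pred_eq_of_mod_two (j := j) (by omega) (by omega)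
    exact ⟨h0, hmem.mpr (h1.trans hj), h2⟩


def gain (N j : ℕ) : ℤ := ((min (S.w j) N : ℕ) : ℤ) - (min (S.s j) N : ℕ)

def IsTightRow (N q : ℕ) : Prop :=
  S.Matched q ∧ S.s (q + 1) < N ∧ N ≤ S.s q ∧ (q % 2 = 0 ∨ S.s q = N)

theorem gain_of_lt {N : ℕ} (h : S.s j < N) : S.gain N j = S.xi j := by
  have := S.cast_w_eq j
  have := S.xi_trichotomy j
  unfold gain
  omega

theorem gain_of_le {N : ℕ} (h : N ≤ S.s j) :
    S.gain N j = if S.xi j = -1 ∧ S.s j = N then -1 else 0 := by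
  have := S.cast_w_eq j
  have := S.xi_trichotomy j
  unfold gain
  split_ifs <;> omega

theorem sum_Ico_gain {N t : ℕ} (ht : t ≤ S.L) (hlt : ∀ j, t ≤ j → S.s j < N) :
    ∑ j ∈ Ico t S.L, S.gain N j = -∑ j ∈ range t, S.xi j := by
  rw [sum_congr rfl fun j hj => S.gain_of_lt (hlt j (mem_Ico.mp hj).1)]
  have := sum_range_add_sum_Ico S.xi ht
  rw [S.sum_range_xi] at this
  omega

/-- `ξ = -1` needs a strict descent of `s`. -/
theorem sum_range_gain {N q : ℕ} (hq : N ≤ S.s q) : ∑ j ∈ range q, S.gain N j = 0 := by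
  refine sum_eq_zero fun j hj => ?_
  have hj1 : N ≤ S.s (j + 1) := hq.trans (S.antitone_s (mem_range.mp hj))
  rw [S.gain_of_le (hj1.trans (S.s_succ_le j)), if_neg]
  exact fun h => by have := S.s_succ_lt_of_xi_eq_neg_one h.1; omega

theorem sum_gain_eq_zero_or {N : ℕ} (hN : 0 < N) :
    ∑ j ∈ range S.L, S.gain N j = 0 ∨
      (∑ j ∈ range S.L, S.gain N j = -1 ∧ ∃ q, S.IsTightRow N q) := by
  obtain ⟨c, hc⟩ := exists_forall_iff_lt (p := fun j => N ≤ S.s j)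
    (fun i j hij h => h.trans (S.antitone_s hij))
    ⟨S.L, by simp only [s, S.l1_eq_zero S.L le_rfl, S.l2_eq_zero S.L le_rfl]; omega⟩
  have hlt : ∀ j, c ≤ j → S.s j < N := fun j hj => not_le.mp fun h => by
    have := (hc j).mp h
    omega
  have hcL : c ≤ S.L := not_lt.mp fun h => by
    have := (hc S.L).mpr h
    simp only [s, S.l1_eq_zero S.L le_rfl, S.l2_eq_zero S.L le_rfl] at this
    omega
  rcases c with _ | q
  · left
    simpa using S.sum_Ico_gain (N := N) (Nat.zero_le _) hlt
  have hq : N ≤ S.s q := (hc q).mpr (Nat.lt_succ_self q)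
  have hq1 := hlt (q + 1) le_rfl
  rw [← sum_range_add_sum_Ico _ hcL, sum_range_succ, S.sum_range_gain hq, S.gain_of_le hq,
    S.sum_Ico_gain hcL hlt, S.sum_range_succ_xi]
  by_cases hm : S.Matched q ∧ S.xi q ≠ -1
  · have hqe : q % 2 = 0 := by
      by_contra hqo
      exact hm.2 ((S.xi_eq_neg_one_iff q).mpr ⟨by omega, hm.1, by omega⟩)
    exact Or.inr ⟨by simp [hm], q, hm.1, hq1, hq, Or.inl hqe⟩
  · by_cases hx : S.xi q = -1 ∧ S.s q = N
    · exact Or.inr ⟨by simp [hx], q, S.matched_of_xi_ne_zero (by omega), hq1, hq, Or.inr hx.2⟩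
    · exact Or.inl (by simp [hm, hx])

theorem sum_min_s_le_or (N : ℕ) :
    ∑ j ∈ range S.L, min (S.s j) N ≤ ∑ j ∈ range S.L, min (S.w j) N ∨
      (∑ j ∈ range S.L, min (S.s j) N = ∑ j ∈ range S.L, min (S.w j) N + 1 ∧
        ∃ q, S.IsTightRow N q) := by
  rcases Nat.eq_zero_or_pos N with rfl | hN
  · simp
  have hsum : ∑ j ∈ range S.L, S.gain N j =
      ((∑ j ∈ range S.L, min (S.w j) N : ℕ) : ℤ) - (∑ j ∈ range S.L, min (S.s j) N : ℕ) := by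
    simp only [gain, sum_sub_distrib, Nat.cast_sum]
  rcases S.sum_gain_eq_zero_or hN with h | ⟨h, htight⟩
  · exact Or.inl (by omega)
  · exact Or.inr ⟨by omega, htight⟩

theorem parity_of_isTightRow {a b c q : ℕ} (hc : ∀ j, a ≤ S.l1 j ∧ b ≤ S.l2 j ↔ j < c)
    (hge : ∀ j, c ≤ j → S.l1 j ≤ a ∧ S.l2 j ≤ b) (hq : S.IsTightRow (a + b) q) :
    (c % 2 = 1 → S.Matched (c - 1)) ∧ (c % 2 = 0 → a % 2 = 0 ∧ b % 2 = 1) := by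
  obtain ⟨hm, hq1, hq2, hq3⟩ := hq
  have hcq : c ≤ q + 1 := not_lt.mp fun h => by have := (hc (q + 1)).mpr h; unfold s at hq1; omega
  -- the row `q` (if `c = q + 1`) or the row `c` (if `c ≤ q`) has parts exactly `a` and `b`
  rcases Nat.lt_or_ge q c with hlt | hle
  · obtain rfl : c = q + 1 := by omega
    have hQ := (hc q).mpr (Nat.lt_succ_self q)
    unfold Matched at hm ⊢
    unfold s at hq2 hq3
    simp only [Nat.add_sub_cancel]
    exact ⟨fun _ => hm, fun _ => by omega⟩
  · have := hge q hle
    have := hge c le_rfl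
    have := S.isPartitionOf_l1.1 hle
    have := S.isPartitionOf_l2.1 hle
    have hmc : S.Matched c := by unfold Matched at hm ⊢; unfold s at hq2; omega
    refine ⟨fun hodd => ?_, fun _ => by unfold Matched at hmc; unfold s at hq2; omega⟩
    obtain ⟨i, rfl⟩ : ∃ i, c = i + 1 := ⟨c - 1, by omega⟩
    exact (S.matched_iff_of_mod_two (by omega)).mpr hmc

theorem odd_of_min_add_min_eq {a b q : ℕ}
    (hpw : ∀ j, min (S.l1 j) a + min (S.l2 j) b = min (S.s j) (a + b))
    (hq : S.IsTightRow (a + b) q) :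
    Odd (a + 1 + ∑ j ∈ range S.L, min (S.l1 j) a) ∧ Odd (b + ∑ j ∈ range S.L, min (S.l2 j) b) := by
  have hqN := hq.2.1
  unfold s at hqN
  obtain ⟨c, hc⟩ := exists_forall_iff_lt (p := fun j => a ≤ S.l1 j ∧ b ≤ S.l2 j)
    (fun i j hij h => ⟨h.1.trans (S.isPartitionOf_l1.1 hij), h.2.trans (S.isPartitionOf_l2.1 hij)⟩)
    ⟨S.L, by simp only [S.l1_eq_zero S.L le_rfl, S.l2_eq_zero S.L le_rfl]; omega⟩
  have hge : ∀ j, c ≤ j → S.l1 j ≤ a ∧ S.l2 j ≤ b := fun j hj => by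
    have := hpw j
    have := (hc j).not.mpr (not_lt.mpr hj)
    unfold s at *
    omega
  have hcL : c ≤ S.L := not_lt.mp fun h => by
    have := (hc S.L).mpr h
    simp only [S.l1_eq_zero S.L le_rfl, S.l2_eq_zero S.L le_rfl] at this
    omega
  have hA := S.isPartitionOf_l1.sum_min_add_sum_range S.l1_eq_zero hcL
    (fun j hj => ((hc j).mpr hj).1) fun j hj => (hge j hj).1
  have hB := S.isPartitionOf_l2.sum_min_add_sum_range S.l2_eq_zero hcL
    (fun j hj => ((hc j).mpr hj).2) fun j hj => (hge j hj).2
  have hpar := S.parity_of_isTightRow hc hge hq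
  have hp1 := sum_range_two_mul_mod_two S.l1_mod_two
  have hp2 := sum_range_two_mul_mod_two S.l2_mod_two
  have := Nat.even_iff.mp S.even_d1
  have := Nat.even_iff.mp S.even_d2
  rw [Nat.odd_iff, Nat.odd_iff]
  obtain ⟨k, rfl | rfl⟩ : ∃ k, c = 2 * k ∨ c = 2 * k + 1 := ⟨c / 2, by omega⟩
  · have := hp1 k
    have := hp2 k
    have := hpar.2 (by omega)
    rw [show 2 * k * a = 2 * (k * a) by ring] at hA
    rw [show 2 * k * b = 2 * (k * b) by ring] at hB
    omega
  · have := hp1 k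
    have := hp2 k
    have := hpar.1 (by omega)
    rw [sum_range_succ] at hA hB
    rw [show (2 * k + 1) * a = 2 * (k * a) + a by ring] at hA
    rw [show (2 * k + 1) * b = 2 * (k * b) + b by ring] at hB
    unfold Matched at this
    simp only [Nat.add_sub_cancel] at this
    omega

theorem sum_ptrans_add_sum_ptrans_le (a b : ℕ) :
    ∑ v ∈ range a, ptrans S.l1 v + ∑ v ∈ range b, ptrans S.l2 v ≤
      ∑ v ∈ range (a + b), ptrans S.w v + 1 := by
  rw [← sum_min_eq_sum_ptrans S.l1_eq_zero, ← sum_min_eq_sum_ptrans S.l2_eq_zero,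
    ← sum_min_eq_sum_ptrans fun _ => S.w_eq_zero_of_le, ← sum_add_distrib]
  have hle : ∑ j ∈ range S.L, (min (S.l1 j) a + min (S.l2 j) b) ≤
      ∑ j ∈ range S.L, min (S.s j) (a + b) := sum_le_sum fun j _ => by unfold s; omega
  rcases S.sum_min_s_le_or (a + b) with h | ⟨h, -⟩ <;> omega

theorem odd_of_sum_ptrans_add_sum_ptrans_eq {a b : ℕ}
    (h : ∑ v ∈ range a, ptrans S.l1 v + ∑ v ∈ range b, ptrans S.l2 v =
      ∑ v ∈ range (a + b), ptrans S.w v + 1) :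
    Odd (a + 1 + ∑ v ∈ range a, ptrans S.l1 v) ∧ Odd (b + ∑ v ∈ range b, ptrans S.l2 v) := by
  rw [← sum_min_eq_sum_ptrans S.l1_eq_zero, ← sum_min_eq_sum_ptrans S.l2_eq_zero,
    ← sum_min_eq_sum_ptrans fun _ => S.w_eq_zero_of_le, ← sum_add_distrib] at h
  rw [← sum_min_eq_sum_ptrans S.l1_eq_zero, ← sum_min_eq_sum_ptrans S.l2_eq_zero]
  have hpw : ∀ j ∈ range S.L, min (S.l1 j) a + min (S.l2 j) b ≤ min (S.s j) (a + b) :=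
    fun j _ => by unfold s; omega
  rcases S.sum_min_s_le_or (a + b) with h' | ⟨h', q, hq⟩
  · have := sum_le_sum hpw
    omega
  refine S.odd_of_min_add_min_eq (fun j => ?_) hq
  by_cases hj : j < S.L
  · exact (sum_eq_sum_iff_of_le hpw).mp (by have := sum_le_sum hpw; omega) j (mem_range.mpr hj)
  · simp [s, S.l1_eq_zero j (not_lt.mp hj), S.l2_eq_zero j (not_lt.mp hj)]

theorem sum_range_add_sum_range_le {σ1 σ2 : ℕ → ℕ} (ha1 : Antitone σ1) (ho1 : IsOrthogonal σ1)
    (ha2 : Antitone σ2) (ho2 : IsOrthogonal σ2) (h1 : NDomLE σ1 (plusOne (ptrans S.l1)))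
    (h2 : NDomLE σ2 (ptrans S.l2)) (a b : ℕ) :
    ∑ j ∈ range a, σ1 j + ∑ j ∈ range b, σ2 j ≤ ∑ v ∈ range (a + b), ptrans S.w v + 1 := by
  refine sum_range_add_sum_range_le_of_odd (C := fun N => ∑ v ∈ range N, ptrans S.w v)
    ha1 ho1 ha2 ho2 h1 h2 (fun a b => ?_)
    (fun a b h => ?_) a b
  · rcases Nat.eq_zero_or_pos a with rfl | ha
    · have := S.sum_ptrans_add_sum_ptrans_le 0 b
      simp only [range_zero, sum_empty] at this ⊢
      omega
    · rw [sum_range_plusOne ha]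
      have := S.sum_ptrans_add_sum_ptrans_le a b
      omega
  · rcases Nat.eq_zero_or_pos a with rfl | ha
    · have := S.sum_ptrans_add_sum_ptrans_le 0 b
      simp only [range_zero, sum_empty] at this h
      omega
    · rw [sum_range_plusOne ha] at h ⊢
      have := S.odd_of_sum_ptrans_add_sum_ptrans_eq (a := a) (b := b) (by omega)
      rwa [← add_assoc, add_right_comm a]

variable {u σ1 σ2 : ℕ → ℕ}

theorem le_plusOne_ptrans_w (hu : IsUnionOf u σ1 σ2) {m1 m2 : ℕ} (hp1 : IsPartitionOf σ1 m1)
    (ho1 : IsOrthogonal σ1) (h1 : NDomLE σ1 (plusOne (ptrans S.l1)))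
    (hp2 : IsPartitionOf σ2 m2) (ho2 : IsOrthogonal σ2) (h2 : NDomLE σ2 (ptrans S.l2)) :
    NDomLE u (plusOne (ptrans S.w)) := by
  intro N
  rcases Nat.eq_zero_or_pos N with rfl | hN
  · simp
  obtain ⟨B, hB1, hB2⟩ := hp1.exists_common_bound hp2
  obtain ⟨a, b, rfl, hle⟩ := hu.exists_sum_range_le hp1.1 hp2.1 hB1 hB2 N
  rw [sum_range_plusOne hN]
  exact hle.trans (S.sum_range_add_sum_range_le hp1.1 ho1 hp2.1 ho2 h1 h2 a b)

theorem w_le_minusOne_ptrans (hu : IsUnionOf u σ1 σ2) (hp1 : IsPartitionOf σ1 (S.d1 + 1))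
    (ho1 : IsOrthogonal σ1) (h1 : NDomLE σ1 (plusOne (ptrans S.l1)))
    (hp2 : IsPartitionOf σ2 S.d2) (ho2 : IsOrthogonal σ2) (h2 : NDomLE σ2 (ptrans S.l2)) :
    NDomLE S.w (minusOne (ptrans u)) := by
  obtain ⟨B, hB1, hB2⟩ := hp1.exists_common_bound hp2
  obtain ⟨Bu, hBu⟩ := hu.2.1
  have hsum := (hu.isPartitionOf hp1 hp2).sum_range_eq hBu
  have hw := S.isPartitionOf_w.sum_range_le
  intro M
  by_cases hM : 0 < ptrans u M
  · rw [sum_range_minusOne_of_pos (ptrans_antitone hBu) hM,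
      sum_congr rfl fun v _ => hu.ptrans_apply hp1.1 hp2.1 hB1 hB2 v, sum_add_distrib]
    have e1 := hp1.sum_ptrans_add_sum_range_ptrans M
    have e2 := hp2.sum_ptrans_add_sum_range_ptrans M
    have key := S.sum_range_add_sum_range_le hp1.1 ho1 hp2.1 ho2 h1 h2 (ptrans σ1 M) (ptrans σ2 M)
    have hb := S.isPartitionOf_w.sum_ptrans_add_sum_range_le (ptrans σ1 M + ptrans σ2 M) M
    rw [Nat.mul_add] at hb
    omega
  · have hall : ∀ j, min (u j) M = u j := fun j =>
      min_eq_left (not_lt.mp fun h => hM (Nat.zero_lt_of_lt ((lt_ptrans_iff hu.1 hBu).mpr h)))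
    have := sum_range_le_sum_range_minusOne_add_one (ptrans_antitone hBu) M
    rw [← sum_min_eq_sum_ptrans hBu, sum_congr rfl fun j _ => hall j, hsum] at this
    have := hw M
    omega

end TypeCData

/-- type C.  `d₁, d₂` even, `d = d₁+d₂`, `λ₁` a special symplectic
partition of `d₁`, `λ₂` a special orthogonal partition of `d₂`, `W = W(λ₁,λ₂)` with
`ε₁ = 0, ε₂ = 1`.
(i) `W` is a symplectic partition of `d`;
(ii) if `ν₁` is a B-collapse of `(λ₁ᵗ)⁺`, `ν₂` a D-collapse of `λ₂ᵗ`, `ν` a B-collapse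
of `(Wᵗ)⁺`, then `ν₁ ∪ ν₂ ≤ ν`;
(iii) if moreover `η` is a C-collapse of `((ν₁ ∪ ν₂)ᵗ)⁻` then `W ≤ η`. -/
theorem stmt1 (d1 d2 : ℕ) (hd1 : Even d1) (hd2 : Even d2) (lam1 lam2 : ℕ → ℕ)
    (h1 : IsPartitionOf lam1 d1) (h1sp : IsSymplectic lam1)
    (h1s : IsSymplectic (ptrans lam1))
    (h2 : IsPartitionOf lam2 d2) (h2o : IsOrthogonal lam2)
    (h2s : IsSymplectic (ptrans lam2)) :
    (∃ w : ℕ → ℕ, (∀ j, (w j : ℤ) = wald lam1 lam2 0 1 (d1+d2) j) ∧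
        IsPartitionOf w (d1+d2) ∧ IsSymplectic w) ∧
    (∀ w : ℕ → ℕ, (∀ j, (w j : ℤ) = wald lam1 lam2 0 1 (d1+d2) j) →
      ∀ ν1 ν2 ν : ℕ → ℕ,
        IsBCollapse (d1+1) (plusOne (ptrans lam1)) ν1 →
        IsDCollapse d2 (ptrans lam2) ν2 →
        IsBCollapse (d1+d2+1) (plusOne (ptrans w)) ν →
        ∀ u : ℕ → ℕ, IsUnionOf u ν1 ν2 →
          NDomLE u ν ∧
          ∀ η : ℕ → ℕ, IsCCollapse (d1+d2) (minusOne (ptrans u)) η →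
            NDomLE w η) := by
  obtain ⟨N1, hN1, -⟩ := h1.2
  obtain ⟨N2, hN2, -⟩ := h2.2
  let S : TypeCData := ⟨lam1, lam2, d1, d2, hd1, hd2, h1, h1sp, h1s, h2, h2o, h2s, N1 + N2,
    fun j hj => hN1 j (by omega), fun j hj => hN2 j (by omega)⟩
  refine ⟨⟨S.w, S.cast_w, S.isPartitionOf_w, S.isSymplectic_w⟩, ?_⟩
  intro w hw ν1 ν2 ν hν1 hν2 hν u hu
  obtain rfl : w = S.w := funext fun j => by exact_mod_cast (hw j).trans (S.cast_w j).symm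
  obtain ⟨hp1, ho1, hle1, -⟩ := hν1
  obtain ⟨hp2, ho2, hle2, -⟩ := hν2
  refine ⟨hν.2.2.2 u (by simpa only [add_right_comm] using hu.isPartitionOf hp1 hp2)
    (hu.isOrthogonal ho1 ho2) (S.le_plusOne_ptrans_w hu hp1 ho1 hle1 hp2 ho2 hle2), fun η hη => ?_⟩
  exact hη.2.2.2 S.w S.isPartitionOf_w S.isSymplectic_w
    (S.w_le_minusOne_ptrans hu hp1 ho1 hle1 hp2 ho2 hle2)
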